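/- arXiv:2505.24657 — 5 statements merged into one kernel-verified Lean document; each statement's English description precedes it below -/
import Mathlib

section
/- Let (X,d) be a compact metric space and let (X, f_{1,∞}) be a non-autonomous discrete system. If f_{1,∞} is multi-transitive, then for every m ∈ ℕ and every collection of nonempty open subsets U_1, …, U_m, V_1, …, V_m of X, the set {l ∈ ℕ : f_1^{lj}(U_j) ∩ V_j ≠ ∅ for all j = 1, …, m} is infinite. -/
open Set Filter

/-- `nds f i n` is the `n`-step composition `f_i^n = f (i+n-1) ∘ ⋯ ∘ f i`, with `nds f i 0 = id`. -/
def nds {X : Type*} (f : ℕ → X → X) (i : ℕ) : ℕ → X → X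
  | 0 => id
  | n + 1 => f (i + n) ∘ nds f i n

section TopDefs

variable {X : Type*} [TopologicalSpace X]

/-- The NDS `f_{1,∞}` is (topologically) transitive. -/
def NDSTransitive (f : ℕ → X → X) : Prop :=
  ∀ U V : Set X, IsOpen U → U.Nonempty → IsOpen V → V.Nonempty →
    ∃ n : ℕ, 0 < n ∧ (nds f 1 n '' U ∩ V).Nonempty

/-- The NDS `f_{1,∞}` is mixing. -/
def NDSMixing (f : ℕ → X → X) : Prop :=
  ∀ U V : Set X, IsOpen U → U.Nonempty → IsOpen V → V.Nonempty →
    ∃ N : ℕ, ∀ n : ℕ, N ≤ n → (nds f 1 n '' U ∩ V).Nonempty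

/-- The NDS `f_{1,∞}` is weakly mixing. -/
def NDSWeaklyMixing (f : ℕ → X → X) : Prop :=
  ∀ U₁ U₂ V₁ V₂ : Set X, IsOpen U₁ → U₁.Nonempty → IsOpen U₂ → U₂.Nonempty →
    IsOpen V₁ → V₁.Nonempty → IsOpen V₂ → V₂.Nonempty →
    ∃ n : ℕ, 0 < n ∧ (nds f 1 n '' U₁ ∩ V₁).Nonempty ∧ (nds f 1 n '' U₂ ∩ V₂).Nonempty

/-- The NDS `f_{1,∞}` is multi-transitive. -/
def NDSMultiTransitive (f : ℕ → X → X) : Prop :=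
  ∀ m : ℕ, 0 < m → ∀ U V : Fin m → Set X,
    (∀ j, IsOpen (U j)) → (∀ j, (U j).Nonempty) →
    (∀ j, IsOpen (V j)) → (∀ j, (V j).Nonempty) →
    ∃ l : ℕ, 0 < l ∧ ∀ j : Fin m, (nds f 1 (l * (j.1 + 1)) '' U j ∩ V j).Nonempty

/-- The NDS `f_{1,∞}` is totally transitive. -/
def NDSTotallyTransitive (f : ℕ → X → X) : Prop :=
  ∀ k : ℕ, 0 < k → ∀ U V : Set X, IsOpen U → U.Nonempty → IsOpen V → V.Nonempty →
    ∃ n : ℕ, 0 < n ∧ (nds f 1 (n * k) '' U ∩ V).Nonempty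

/-- The NDS `f_{1,∞}` is minimal: every orbit is dense. -/
def NDSMinimal (f : ℕ → X → X) : Prop :=
  ∀ x : X, Dense (Set.range fun n : ℕ => nds f 1 n x)

/-- The NDS `f_{1,∞}` is feeble open. -/
def FeebleOpen (f : ℕ → X → X) : Prop :=
  ∀ i : ℕ, 1 ≤ i → ∀ U : Set X, IsOpen U → U.Nonempty → (interior (f i '' U)).Nonempty

/-- A set of positive integers is syndetic (has bounded gaps). -/
def SyndeticSet (A : Set ℕ) : Prop :=
  ∃ M : ℕ, ∀ i : ℕ, 1 ≤ i → ∃ j ∈ A, i ≤ j ∧ j ≤ i + M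

/-- A set of positive integers is thick (contains arbitrarily long runs). -/
def ThickSet (A : Set ℕ) : Prop :=
  ∀ p : ℕ, ∃ n : ℕ, ∀ j : ℕ, n ≤ j → j ≤ n + p → j ∈ A

/-- The NDS `f_{1,∞}` is syndetically transitive. -/
def NDSSyndeticallyTransitive (f : ℕ → X → X) : Prop :=
  ∀ U V : Set X, IsOpen U → U.Nonempty → IsOpen V → V.Nonempty →
    SyndeticSet {n : ℕ | 0 < n ∧ (nds f 1 n '' U ∩ V).Nonempty}

/-- The NDS `f_{1,∞}` has dense periodic points. -/
def NDSDensePeriodicPoints (f : ℕ → X → X) : Prop :=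
  Dense {x : X | ∃ k : ℕ, 0 < k ∧ ∀ n : ℕ, 0 < n → nds f 1 (k * n) x = x}

/-- The NDS `f_{k,∞}` is strongly transitive. -/
def NDSStronglyTransitiveFrom (f : ℕ → X → X) (k : ℕ) : Prop :=
  ∀ U : Set X, IsOpen U → U.Nonempty →
    ∃ M : ℕ, 0 < M ∧ (⋃ i ∈ Set.Icc 1 M, nds f k i '' U) = Set.univ

/-- An autonomous map is transitive. -/
def MapTransitive {Y : Type*} [TopologicalSpace Y] (g : Y → Y) : Prop :=
  ∀ U V : Set Y, IsOpen U → U.Nonempty → IsOpen V → V.Nonempty →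
    ∃ n : ℕ, 0 < n ∧ (g^[n] '' U ∩ V).Nonempty

/-- An autonomous map is weakly mixing. -/
def MapWeaklyMixing {Y : Type*} [TopologicalSpace Y] (g : Y → Y) : Prop :=
  ∀ U₁ U₂ V₁ V₂ : Set Y, IsOpen U₁ → U₁.Nonempty → IsOpen U₂ → U₂.Nonempty →
    IsOpen V₁ → V₁.Nonempty → IsOpen V₂ → V₂.Nonempty →
    ∃ n : ℕ, 0 < n ∧ (g^[n] '' U₁ ∩ V₁).Nonempty ∧ (g^[n] '' U₂ ∩ V₂).Nonempty

/-- An autonomous map is totally transitive. -/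
def MapTotallyTransitive {Y : Type*} [TopologicalSpace Y] (g : Y → Y) : Prop :=
  ∀ k : ℕ, 0 < k → ∀ U V : Set Y, IsOpen U → U.Nonempty → IsOpen V → V.Nonempty →
    ∃ n : ℕ, 0 < n ∧ (g^[n * k] '' U ∩ V).Nonempty

/-- An autonomous map is syndetically transitive. -/
def MapSyndeticallyTransitive {Y : Type*} [TopologicalSpace Y] (g : Y → Y) : Prop :=
  ∀ U V : Set Y, IsOpen U → U.Nonempty → IsOpen V → V.Nonempty →
    SyndeticSet {n : ℕ | 0 < n ∧ (g^[n] '' U ∩ V).Nonempty}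

/-- An autonomous map is minimal. -/
def MapMinimal {Y : Type*} [TopologicalSpace Y] (g : Y → Y) : Prop :=
  ∀ x : Y, Dense (Set.range fun n : ℕ => g^[n] x)

end TopDefs

section MetricDefs

variable {X : Type*} [MetricSpace X]

/-- The compositions `(f_r^k)` converge collectively to `(f^k)` (w.r.t. the supremum metric). -/
def CollectivelyConverges (f : ℕ → X → X) (g : X → X) : Prop :=
  ∀ ε : ℝ, 0 < ε → ∃ r₀ : ℕ, ∀ r : ℕ, r₀ ≤ r → ∀ k : ℕ, 1 ≤ k → ∀ x : X,
    dist (nds f r k x) (g^[k] x) < ε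

/-- `N(U, δ)`: the times at which the NDS is `δ`-sensitive on `U`. -/
def SensSet (f : ℕ → X → X) (U : Set X) (δ : ℝ) : Set ℕ :=
  {n : ℕ | 0 < n ∧ ∃ x ∈ U, ∃ y ∈ U, δ < dist (nds f 1 n x) (nds f 1 n y)}

/-- The NDS `f_{1,∞}` is multi-sensitive. -/
def NDSMultiSensitive (f : ℕ → X → X) : Prop :=
  ∃ δ : ℝ, 0 < δ ∧ ∀ m : ℕ, 0 < m → ∀ U : Fin m → Set X,
    (∀ i, IsOpen (U i)) → (∀ i, (U i).Nonempty) → (⋂ i, SensSet f (U i) δ).Nonempty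

/-- The NDS `f_{1,∞}` is thickly sensitive. -/
def NDSThicklySensitive (f : ℕ → X → X) : Prop :=
  ∃ δ : ℝ, 0 < δ ∧ ∀ U : Set X, IsOpen U → U.Nonempty → ThickSet (SensSet f U δ)

/-- The NDS `f_{1,∞}` is syndetically sensitive. -/
def NDSSyndeticallySensitive (f : ℕ → X → X) : Prop :=
  ∃ δ : ℝ, 0 < δ ∧ ∀ U : Set X, IsOpen U → U.Nonempty → SyndeticSet (SensSet f U δ)

/-- The NDS `f_{1,∞}` is mildly mixing: its product with every transitive NDS on a compact
metric space is transitive. -/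
def NDSMildlyMixing (f : ℕ → X → X) : Prop :=
  ∀ (Y : Type*) [MetricSpace Y] [CompactSpace Y] (g : ℕ → Y → Y),
    (∀ n : ℕ, 1 ≤ n → Continuous (g n)) → NDSTransitive g →
    NDSTransitive (fun n (p : X × Y) => (f n p.1, g n p.2))

/-- The NDS `f_{1,∞}` is Li–Yorke chaotic. -/
def LiYorkeChaotic (f : ℕ → X → X) : Prop :=
  ∃ S : Set X, ¬S.Countable ∧ ∀ x ∈ S, ∀ y ∈ S, x ≠ y →
    Filter.liminf (fun n : ℕ => dist (nds f 1 n x) (nds f 1 n y)) Filter.atTop = 0 ∧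
    0 < Filter.limsup (fun n : ℕ => dist (nds f 1 n x) (nds f 1 n y)) Filter.atTop

end MetricDefs

section MultiTransitive

variable {X : Type*} [TopologicalSpace X]

def multiHittingTimes (f : ℕ → X → X) {m : ℕ} (U V : Fin m → Set X) : Set ℕ :=
  {l : ℕ | 0 < l ∧ ∀ j : Fin m, (nds f 1 (l * (j.1 + 1)) '' U j ∩ V j).Nonempty}

/- Apply multi-transitivity to the `m * k` pairs whose `i`-th one is `(U_{⌊i/k⌋}, V_{⌊i/k⌋})`:
the pair with index `k * j + (k - 1)` is `(U_j, V_j)` and is hit at time `l * k * (j + 1)`. -/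
theorem NDSMultiTransitive.exists_mul_mem_multiHittingTimes {f : ℕ → X → X}
    (hmt : NDSMultiTransitive f) {m k : ℕ} (hm : 0 < m) (hk : 0 < k) {U V : Fin m → Set X}
    (hUo : ∀ j, IsOpen (U j)) (hUne : ∀ j, (U j).Nonempty)
    (hVo : ∀ j, IsOpen (V j)) (hVne : ∀ j, (V j).Nonempty) :
    ∃ l, l * k ∈ multiHittingTimes f U V := by
  obtain ⟨l, hl, hhit⟩ := hmt (m * k) (Nat.mul_pos hm hk) (U ∘ Fin.divNat) (V ∘ Fin.divNat)
    (fun _ => hUo _) (fun _ => hUne _) (fun _ => hVo _) (fun _ => hVne _)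
  refine ⟨l, Nat.mul_pos hl hk, fun j => ?_⟩
  have hj := hhit (Fin.mkDivMod j ⟨k - 1, Nat.sub_lt hk one_pos⟩)
  have htime : l * ((Fin.mkDivMod j ⟨k - 1, Nat.sub_lt hk one_pos⟩ : ℕ) + 1) =
      l * k * (j.1 + 1) := by
    simp only [Fin.mkDivMod]
    rw [Nat.add_assoc, Nat.sub_add_cancel (show 1 ≤ k from hk)]
    ring
  simpa only [Function.comp_apply, Fin.divNat_mkDivMod, htime] using hj

end MultiTransitive

theorem multiTransitive_hitting_sets_infinite_general {X : Type*} [MetricSpace X]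
    (f : ℕ → X → X) (hmt : NDSMultiTransitive f) :
    ∀ m : ℕ, 0 < m → ∀ U V : Fin m → Set X,
      (∀ j, IsOpen (U j)) → (∀ j, (U j).Nonempty) →
      (∀ j, IsOpen (V j)) → (∀ j, (V j).Nonempty) →
      {l : ℕ | 0 < l ∧ ∀ j : Fin m,
        (nds f 1 (l * (j.1 + 1)) '' U j ∩ V j).Nonempty}.Infinite := by
  intro m hm U V hUo hUne hVo hVne
  refine Set.infinite_of_forall_exists_gt fun N => ?_
  obtain ⟨l, hl⟩ := hmt.exists_mul_mem_multiHittingTimes hm N.succ_pos hUo hUne hVo hVne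
  exact ⟨l * (N + 1), hl, Nat.lt_of_lt_of_le N.lt_succ_self
    (Nat.le_mul_of_pos_left _ (Nat.pos_of_mul_pos_right hl.1))⟩

theorem multiTransitive_hitting_sets_infinite {X : Type*} [MetricSpace X] [CompactSpace X]
    (f : ℕ → X → X) (hcont : ∀ n : ℕ, 1 ≤ n → Continuous (f n))
    (hmt : NDSMultiTransitive f) :
    ∀ m : ℕ, 0 < m → ∀ U V : Fin m → Set X,
      (∀ j, IsOpen (U j)) → (∀ j, (U j).Nonempty) →
      (∀ j, IsOpen (V j)) → (∀ j, (V j).Nonempty) →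
      {l : ℕ | 0 < l ∧ ∀ j : Fin m,
        (nds f 1 (l * (j.1 + 1)) '' U j ∩ V j).Nonempty}.Infinite :=
  multiTransitive_hitting_sets_infinite_general f hmt
end

section
/- Let (X,d) be a compact metric space and let (X, f_{1,∞}) be a non-autonomous discrete system. If f_{1,∞} is weakly mixing, then for every collection of nonempty open subsets U_1, U_2, V_1, V_2 of X, the set {n ∈ ℕ : f_1^n(U_1) ∩ V_1 ≠ ∅ and f_1^n(U_2) ∩ V_2 ≠ ∅} is infinite. -/
open Set Filter

/-!
Weak mixing on a nontrivial Hausdorff space forbids isolated points, so every nonempty open set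
is infinite. Given `N`, this lets us shrink `U₁, V₁` to nonempty open `U', V'` with no hit at any
time `n ≤ N`; weak mixing applied to `U', U₂, V', V₂` then produces a common hitting time, which
must exceed `N`.
-/

section NDS

open Topology

variable {X : Type*} [TopologicalSpace X] {f : ℕ → X → X}

theorem continuous_nds {i : ℕ} (hcont : ∀ k, i ≤ k → Continuous (f k)) (n : ℕ) :
    Continuous (nds f i n) := by
  induction n with
  | zero => exact continuous_id
  | succ n ih => exact (hcont (i + n) (Nat.le_add_right i n)).comp ih

/-- An isolated point would have to be sent into two disjoint open sets at the same time. -/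
theorem NDSWeaklyMixing.neBot_nhdsNE [T2Space X] [Nontrivial X] (hwm : NDSWeaklyMixing f)
    (x : X) : NeBot (𝓝[≠] x) := by
  by_contra hx
  have hopen : IsOpen {x} := (isOpen_singleton_iff_punctured_nhds x).2 (not_neBot.1 hx)
  obtain ⟨a, b, hab⟩ := exists_pair_ne X
  obtain ⟨A, B, hA, hB, ha, hb, hAB⟩ := t2_separation hab
  obtain ⟨n, -, ⟨_, ⟨_, rfl, rfl⟩, hA⟩, ⟨_, ⟨_, rfl, rfl⟩, hB⟩⟩ :=
    hwm {x} {x} A B hopen (singleton_nonempty x) hopen (singleton_nonempty x)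
      hA ⟨a, ha⟩ hB ⟨b, hb⟩
  exact hAB.ne_of_mem hA hB rfl

/-- Since `V` is infinite, it has a point `v` off the finitely many points `f_1^n x₀`, `n ∈ T`;
separate `v` from them and pull the separating neighbourhood back to `U`. -/
theorem exists_open_subsets_disjoint_nds_image [T2Space X] [∀ x : X, NeBot (𝓝[≠] x)]
    (hcont : ∀ k, 1 ≤ k → Continuous (f k)) (T : Finset ℕ)
    {U V : Set X} (hU : IsOpen U) (hUne : U.Nonempty) (hV : IsOpen V) (hVne : V.Nonempty) :
    ∃ U' ⊆ U, ∃ V' ⊆ V, IsOpen U' ∧ U'.Nonempty ∧ IsOpen V' ∧ V'.Nonempty ∧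
      ∀ n ∈ T, Disjoint (nds f 1 n '' U') V' := by
  obtain ⟨x₀, hx₀⟩ := hUne
  obtain ⟨v₀, hv₀⟩ := hVne
  have hS : ((fun n => nds f 1 n x₀) '' T).Finite := T.finite_toSet.image _
  obtain ⟨v, hvV, hvS⟩ := ((infinite_of_mem_nhds v₀ (hV.mem_nhds hv₀)).sdiff hS).nonempty
  obtain ⟨A, B, hA, hB, hvA, hSB, hAB⟩ := SeparatedNhds.of_isCompact_isCompact
    isCompact_singleton hS.isCompact (disjoint_singleton_left.2 hvS)
  refine ⟨U ∩ ⋂ n ∈ T, nds f 1 n ⁻¹' B, inter_subset_left, V ∩ A, inter_subset_left,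
    hU.inter (isOpen_biInter_finset fun n _ => hB.preimage (continuous_nds hcont n)),
    ⟨x₀, hx₀, mem_iInter₂.2 fun n hn => hSB (mem_image_of_mem _ hn)⟩,
    hV.inter hA, ⟨v, hvV, hvA rfl⟩, fun n hn => ?_⟩
  exact hAB.symm.mono (image_subset_iff.2 fun u hu => mem_iInter₂.1 hu.2 n hn)
    inter_subset_right

end NDS

theorem weaklyMixing_hitting_sets_infinite_general {X : Type*} [MetricSpace X]
    (f : ℕ → X → X) (hcont : ∀ n : ℕ, 1 ≤ n → Continuous (f n))
    (hwm : NDSWeaklyMixing f) :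
    ∀ U₁ U₂ V₁ V₂ : Set X, IsOpen U₁ → U₁.Nonempty → IsOpen U₂ → U₂.Nonempty →
      IsOpen V₁ → V₁.Nonempty → IsOpen V₂ → V₂.Nonempty →
      {n : ℕ | 0 < n ∧ (nds f 1 n '' U₁ ∩ V₁).Nonempty ∧
        (nds f 1 n '' U₂ ∩ V₂).Nonempty}.Infinite := by
  intro U₁ U₂ V₁ V₂ hU₁ hU₁ne hU₂ hU₂ne hV₁ hV₁ne hV₂ hV₂ne
  rcases subsingleton_or_nontrivial X with hX | hX
  · have hits (U V : Set X) (n : ℕ) (hU : U.Nonempty) (hV : V.Nonempty) :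
        (nds f 1 n '' U ∩ V).Nonempty :=
      hV.mono fun v hv => ⟨⟨hU.some, hU.some_mem, Subsingleton.elim _ _⟩, hv⟩
    exact (Ioi_infinite 0).mono fun n hn =>
      ⟨hn, hits _ _ n hU₁ne hV₁ne, hits _ _ n hU₂ne hV₂ne⟩
  have := hwm.neBot_nhdsNE
  refine infinite_of_forall_exists_gt fun N => ?_
  obtain ⟨U', hU's, V', hV's, hU', hU'ne, hV', hV'ne, hmiss⟩ :=
    exists_open_subsets_disjoint_nds_image hcont (Finset.Iic N) hU₁ hU₁ne hV₁ hV₁ne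
  obtain ⟨n, hn, hit₁, hit₂⟩ := hwm U' U₂ V' V₂ hU' hU'ne hU₂ hU₂ne hV' hV'ne hV₂ hV₂ne
  refine ⟨n, ⟨hn, hit₁.mono (inter_subset_inter (image_mono hU's) hV's), hit₂⟩, ?_⟩
  by_contra! hnN
  exact hit₁.ne_empty (hmiss n (Finset.mem_Iic.2 hnN)).inter_eq

theorem weaklyMixing_hitting_sets_infinite {X : Type*} [MetricSpace X] [CompactSpace X]
    (f : ℕ → X → X) (hcont : ∀ n : ℕ, 1 ≤ n → Continuous (f n))
    (hwm : NDSWeaklyMixing f) :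
    ∀ U₁ U₂ V₁ V₂ : Set X, IsOpen U₁ → U₁.Nonempty → IsOpen U₂ → U₂.Nonempty →
      IsOpen V₁ → V₁.Nonempty → IsOpen V₂ → V₂.Nonempty →
      {n : ℕ | 0 < n ∧ (nds f 1 n '' U₁ ∩ V₁).Nonempty ∧
        (nds f 1 n '' U₂ ∩ V₂).Nonempty}.Infinite :=
  weaklyMixing_hitting_sets_infinite_general f hcont hwm
end

section
/- Let (X,d) be a compact metric space and let (X, f_{1,∞}) be a non-autonomous discrete system. If f_{1,∞} is mildly mixing, then f_{1,∞} is mixing. -/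
open Set Filter

/-!
Mild mixing is very strong for non-autonomous systems, because the test system may be any
transitive NDS. Given a time `m > 0`, take the two-point system whose compositions `g_1^n` are the
identity for `n = m` and the swap for every other `n > 0`; it is transitive. Transitivity of the
product on `U × {y}` and `V × {y}` needs a time `n > 0` with `f_1^n(U) ∩ V ≠ ∅` at which `y`
has returned, so `n = m`. Hence `f_1^m(U) ∩ V ≠ ∅` for every `m > 0`, which is more than mixing.
-/

universe u v

variable {X : Type u} {Y : Type v}

theorem nds_prod (f : ℕ → X → X) (g : ℕ → Y → Y) (i n : ℕ) (p : X × Y) :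
    nds (fun n (q : X × Y) => (f n q.1, g n q.2)) i n p = (nds f i n p.1, nds g i n p.2) := by
  induction n with
  | zero => rfl
  | succ n ih => simp only [nds, Function.comp_apply, ih]

theorem NDSTransitive.exists_image_inter_nonempty_prod [TopologicalSpace X] [TopologicalSpace Y]
    {f : ℕ → X → X} {g : ℕ → Y → Y} (h : NDSTransitive fun n (p : X × Y) => (f n p.1, g n p.2))
    {U V : Set X} (hU : IsOpen U) (hU' : U.Nonempty) (hV : IsOpen V) (hV' : V.Nonempty)
    {U₂ V₂ : Set Y} (hU₂ : IsOpen U₂) (hU₂' : U₂.Nonempty) (hV₂ : IsOpen V₂) (hV₂' : V₂.Nonempty) :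
    ∃ n, 0 < n ∧ (nds f 1 n '' U ∩ V).Nonempty ∧ (nds g 1 n '' U₂ ∩ V₂).Nonempty := by
  obtain ⟨n, hn, _, ⟨p, hp, rfl⟩, hpV⟩ :=
    h (U ×ˢ U₂) (V ×ˢ V₂) (hU.prod hU₂) (hU'.prod hU₂') (hV.prod hV₂) (hV'.prod hV₂')
  rw [nds_prod] at hpV
  exact ⟨n, hn, ⟨_, mem_image_of_mem _ hp.1, hpV.1⟩, ⟨_, mem_image_of_mem _ hp.2, hpV.2⟩⟩

theorem ndsTransitive_of_forall_exists_nds_eq [TopologicalSpace Y] {g : ℕ → Y → Y}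
    (h : ∀ y z, ∃ n, 0 < n ∧ nds g 1 n y = z) : NDSTransitive g := by
  rintro U V - ⟨y, hy⟩ - ⟨z, hz⟩
  obtain ⟨n, hn, rfl⟩ := h y z
  exact ⟨n, hn, _, mem_image_of_mem _ hy, hz⟩

def telescopeNDS (σ : ℕ → Equiv.Perm Y) : ℕ → Y → Y :=
  fun n => ⇑(σ n * (σ (n - 1))⁻¹)

theorem nds_telescopeNDS (σ : ℕ → Equiv.Perm Y) (hσ : σ 0 = 1) (n : ℕ) :
    nds (telescopeNDS σ) 1 n = σ n := by
  induction n with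
  | zero => simp [nds, hσ]
  | succ n ih =>
    funext y
    simp [nds, telescopeNDS, ih, Nat.add_comm 1 n]

theorem NDSMildlyMixing.exists_image_inter_nonempty_and_perm_apply_eq [MetricSpace X]
    {f : ℕ → X → X} (hf : NDSMildlyMixing.{u, v} f) [MetricSpace Y] [Finite Y]
    (σ : ℕ → Equiv.Perm Y) (hσ₀ : σ 0 = 1) (hσ : ∀ y z, ∃ n, 0 < n ∧ σ n y = z)
    {U V : Set X} (hU : IsOpen U) (hU' : U.Nonempty) (hV : IsOpen V) (hV' : V.Nonempty) (y : Y) :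
    ∃ n, 0 < n ∧ (nds f 1 n '' U ∩ V).Nonempty ∧ σ n y = y := by
  have hg : NDSTransitive (telescopeNDS σ) :=
    ndsTransitive_of_forall_exists_nds_eq fun a b => by
      simpa only [nds_telescopeNDS σ hσ₀] using hσ a b
  have hprod := hf Y _ (fun _ _ => continuous_of_discreteTopology) hg
  obtain ⟨n, hn, hhit, hy⟩ := hprod.exists_image_inter_nonempty_prod hU hU' hV hV'
    (isOpen_discrete {y}) (singleton_nonempty y) (isOpen_discrete {y}) (singleton_nonempty y)
  rw [image_singleton, singleton_inter_nonempty, mem_singleton_iff, nds_telescopeNDS σ hσ₀] at hy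
  exact ⟨n, hn, hhit, hy⟩

theorem NDSMildlyMixing.image_inter_nonempty [MetricSpace X] {f : ℕ → X → X}
    (hf : NDSMildlyMixing.{u, v} f) {U V : Set X} (hU : IsOpen U) (hU' : U.Nonempty)
    (hV : IsOpen V) (hV' : V.Nonempty) {m : ℕ} (hm : 0 < m) : (nds f 1 m '' U ∩ V).Nonempty := by
  by_contra hmiss
  let : MetricSpace (Fin 2) := MetricSpace.induced Fin.val Fin.val_injective inferInstance
  let τ : Equiv.Perm (ULift.{v} (Fin 2)) := Equiv.swap (.up 0) (.up 1)
  have hτ_ne : ∀ y, τ y ≠ y := by decide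
  have hτ : ∀ y z, y ≠ z → τ y = z := by decide
  let σ : ℕ → Equiv.Perm (ULift.{v} (Fin 2)) := fun n => if n = 0 ∨ n = m then 1 else τ
  have hσ : ∀ y z, ∃ n, 0 < n ∧ σ n y = z := by
    intro y z
    by_cases hyz : y = z
    · exact ⟨m, hm, by simp [σ, hyz]⟩
    · exact ⟨m + 1, m.succ_pos, by simp [σ, hτ y z hyz]⟩
  obtain ⟨n, hn, hhit, hfix⟩ :=
    hf.exists_image_inter_nonempty_and_perm_apply_eq σ (by simp [σ]) hσ hU hU' hV hV' (.up 0)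
  obtain rfl : n = m := by
    by_contra hnm
    exact hτ_ne _ (by simpa [σ, hn.ne', hnm] using hfix)
  exact hmiss hhit

theorem mildlyMixing_implies_mixing_general {X : Type*} [MetricSpace X]
    (f : ℕ → X → X)
    (hmm : NDSMildlyMixing f) :
    NDSMixing f :=
  fun _ _ hU hU' hV hV' => ⟨1, fun _ hn => hmm.image_inter_nonempty hU hU' hV hV' hn⟩

theorem mildlyMixing_implies_mixing {X : Type*} [MetricSpace X] [CompactSpace X]
    (f : ℕ → X → X) (hcont : ∀ n : ℕ, 1 ≤ n → Continuous (f n))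
    (hmm : NDSMildlyMixing f) :
    NDSMixing f :=
  mildlyMixing_implies_mixing_general f hmm
end

section
/- Let (X,d) be a compact metric space without isolated points and let (X, f_{1,∞}) be a non-autonomous discrete system. If f_{1,∞} is mixing, then for every compact metric space Y without isolated points and every transitive non-autonomous discrete system (Y, g_{1,∞}), the product system (X × Y, (f_n × g_n)_{n≥1}) is transitive. -/
open Set Filter

/-! Since `f` is mixing, for open `U₁, V₁ ⊆ X` the times `n` with `f_1^n(U₁) ∩ V₁ ≠ ∅` contain a
tail `[N, ∞)`. So it suffices that a transitive `g` on a Hausdorff space without isolated points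
hits any pair of open sets `U₂, V₂` at some time `n > N`. For this, pick `u ∈ U₂` and
`v ∈ V₂` off the finite orbit segment `g_1^1(u), …, g_1^N(u)`; the condition `g_1^n(u') ≠ v'` for
`1 ≤ n ≤ N` is open in `(u', v')`, hence holds on a box `U' × V'` around `(u, v)`, and transitivity
applied to `U', V'` can only answer with a time `n > N`. -/

theorem nds_prodMap {X Y : Type*} (f : ℕ → X → X) (g : ℕ → Y → Y) (i n : ℕ) :
    nds (fun n (p : X × Y) => (f n p.1, g n p.2)) i n = Prod.map (nds f i n) (nds g i n) := by
  induction n with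
  | zero => rfl
  | succ n ih => simp only [nds, ih]; rfl

theorem continuous_nds_s4 {X : Type*} [TopologicalSpace X] {f : ℕ → X → X} {i : ℕ}
    (hf : ∀ m, i ≤ m → Continuous (f m)) (n : ℕ) : Continuous (nds f i n) := by
  induction n with
  | zero => exact continuous_id
  | succ n ih => exact (hf (i + n) (Nat.le_add_right i n)).comp ih

theorem IsOpen.infinite_of_forall_not_isOpen_singleton {Y : Type*} [TopologicalSpace Y]
    [T1Space Y] (hY : ∀ y : Y, ¬IsOpen ({y} : Set Y)) {V : Set Y} (hV : IsOpen V)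
    (hVne : V.Nonempty) : V.Infinite := fun hfin =>
  hY hVne.some (isOpen_singleton_of_finite_mem_nhds _ (hV.mem_nhds hVne.some_mem) hfin)

theorem NDSTransitive.exists_lt_of_forall_not_isOpen_singleton {Y : Type*}
    [TopologicalSpace Y] [T2Space Y] (hY : ∀ y : Y, ¬IsOpen ({y} : Set Y)) {g : ℕ → Y → Y}
    (hg : ∀ m, 1 ≤ m → Continuous (g m)) (hgt : NDSTransitive g) {U V : Set Y}
    (hU : IsOpen U) (hUne : U.Nonempty) (hV : IsOpen V) (hVne : V.Nonempty) (N : ℕ) :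
    ∃ n, N < n ∧ (nds g 1 n '' U ∩ V).Nonempty := by
  obtain ⟨u, hu⟩ := hUne
  have hVinf := hV.infinite_of_forall_not_isOpen_singleton hY hVne
  obtain ⟨v, hvV, hvF⟩ :=
    hVinf.exists_notMem_finite ((finite_Icc 1 N).image fun n => nds g 1 n u)
  set O : Set (Y × Y) := ⋂ n ∈ Finset.Icc 1 N, {p | nds g 1 n p.1 ≠ p.2}
  have hO : IsOpen O := isOpen_biInter_finset fun n _ =>
    isOpen_ne_fun ((continuous_nds_s4 hg n).comp continuous_fst) continuous_snd
  have huv : (u, v) ∈ O := by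
    simp only [O, mem_iInter, Finset.mem_Icc, mem_ofPred_eq]
    exact fun n hn hnv => hvF ⟨n, mem_Icc.2 hn, hnv⟩
  obtain ⟨U', V', hU', hV', hu', hv', hbox⟩ :=
    isOpen_prod_iff.1 (hO.inter (hU.prod hV)) u v ⟨huv, hu, hvV⟩
  obtain ⟨n, hn, _, ⟨u', hu'U', rfl⟩, hv'V'⟩ := hgt U' V' hU' ⟨u, hu'⟩ hV' ⟨v, hv'⟩
  obtain ⟨hO', hu'U, hv'V⟩ := hbox (mk_mem_prod hu'U' hv'V')
  refine ⟨n, ?_, _, mem_image_of_mem _ hu'U, hv'V⟩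
  by_contra! hnN
  exact mem_iInter₂.1 hO' n (Finset.mem_Icc.2 ⟨hn, hnN⟩) rfl

theorem NDSMixing.transitive_prod {X Y : Type*} [TopologicalSpace X] [TopologicalSpace Y]
    {f : ℕ → X → X} {g : ℕ → Y → Y} (hf : NDSMixing f)
    (hg : ∀ U V : Set Y, IsOpen U → U.Nonempty → IsOpen V → V.Nonempty →
      ∀ N, ∃ n, N < n ∧ (nds g 1 n '' U ∩ V).Nonempty) :
    NDSTransitive (fun n (p : X × Y) => (f n p.1, g n p.2)) := by
  intro W W' hW ⟨p, hp⟩ hW' ⟨q, hq⟩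
  obtain ⟨U₁, U₂, hU₁, hU₂, hp₁, hp₂, hUW⟩ := isOpen_prod_iff.1 hW p.1 p.2 hp
  obtain ⟨V₁, V₂, hV₁, hV₂, hq₁, hq₂, hVW⟩ := isOpen_prod_iff.1 hW' q.1 q.2 hq
  obtain ⟨N, hN⟩ := hf U₁ V₁ hU₁ ⟨_, hp₁⟩ hV₁ ⟨_, hq₁⟩
  obtain ⟨n, hNn, hn₂⟩ := hg U₂ V₂ hU₂ ⟨_, hp₂⟩ hV₂ ⟨_, hq₂⟩ N
  refine ⟨n, N.zero_le.trans_lt hNn, Nonempty.mono (inter_subset_inter (image_mono hUW) hVW) ?_⟩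
  rw [nds_prodMap, prodMap_image_prod, prod_inter_prod]
  exact (hN n hNn.le).prod hn₂

theorem mixing_product_transitive_general {X : Type*} [MetricSpace X]
    (f : ℕ → X → X)
    (hmix : NDSMixing f) :
    ∀ (Y : Type*) [MetricSpace Y] [CompactSpace Y],
      (∀ y : Y, ¬IsOpen ({y} : Set Y)) →
      ∀ g : ℕ → Y → Y, (∀ n : ℕ, 1 ≤ n → Continuous (g n)) → NDSTransitive g →
        NDSTransitive (fun n (p : X × Y) => (f n p.1, g n p.2)) :=
  fun _ _ _ hY _ hg hgt => hmix.transitive_prod fun _ _ hU hUne hV hVne =>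
    hgt.exists_lt_of_forall_not_isOpen_singleton hY hg hU hUne hV hVne

theorem mixing_product_transitive {X : Type*} [MetricSpace X] [CompactSpace X]
    (hX : ∀ x : X, ¬IsOpen ({x} : Set X))
    (f : ℕ → X → X) (hcont : ∀ n : ℕ, 1 ≤ n → Continuous (f n))
    (hmix : NDSMixing f) :
    ∀ (Y : Type*) [MetricSpace Y] [CompactSpace Y],
      (∀ y : Y, ¬IsOpen ({y} : Set Y)) →
      ∀ g : ℕ → Y → Y, (∀ n : ℕ, 1 ≤ n → Continuous (g n)) → NDSTransitive g →
        NDSTransitive (fun n (p : X × Y) => (f n p.1, g n p.2)) :=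
  mixing_product_transitive_general f hmix
end

section
/- Let (X,d) be a compact metric space without isolated points and let (X, f_{1,∞}) be a non-autonomous discrete system such that f_{1,∞} is feeble open, each f_n is surjective, (f_n) converges uniformly to a continuous map f : X → X, and the compositions (f_r^k) converge collectively to (f^k). Then the map f is minimal if and only if f_{1,∞} is minimal. -/
open Set Filter

/-!
By collective convergence, for every `ε > 0` there is a time `r₀` after which each NDS orbit
stays `ε`-close to the `F`-orbit of its point at time `r₀`. So a dense orbit of one system is
`ε`-dense for the other, for every `ε`. Going from the NDS to `F`, surjectivity makes every point
the time-`r₀` point of some NDS orbit, and since `X` has no isolated points, that orbit stays dense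
once its first `r₀ + 1` points are removed.
-/

open Topology

lemma nds_add {X : Type*} (f : ℕ → X → X) (i m k : ℕ) :
    nds f i (m + k) = nds f (i + m) k ∘ nds f i m := by
  induction k with
  | zero => rfl
  | succ k ih =>
    change f (i + (m + k)) ∘ nds f i (m + k) = _
    rw [ih, ← add_assoc]
    rfl

lemma nds_one_surjective {X : Type*} {f : ℕ → X → X}
    (hsurj : ∀ n : ℕ, 1 ≤ n → Function.Surjective (f n)) (m : ℕ) :
    Function.Surjective (nds f 1 m) := by
  induction m with
  | zero => exact Function.surjective_id
  | succ m ih => exact (hsurj (1 + m) (Nat.le_add_right 1 m)).comp ih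

lemma CollectivelyConverges.exists_dist_nds_iterate_lt {X : Type*} [MetricSpace X]
    {f : ℕ → X → X} {F : X → X} (hcoll : CollectivelyConverges f F) {ε : ℝ} (hε : 0 < ε) :
    ∃ r₀ : ℕ, ∀ k : ℕ, 1 ≤ k → ∀ x : X,
      dist (nds f 1 (r₀ + k) x) (F^[k] (nds f 1 r₀ x)) < ε := by
  obtain ⟨r₀, hr₀⟩ := hcoll ε hε
  refine ⟨r₀, fun k hk x => ?_⟩
  rw [nds_add, Function.comp_apply]
  exact hr₀ (1 + r₀) (Nat.le_add_left r₀ 1) k hk _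

lemma Metric.dense_of_forall_dense_subset_thickening {X : Type*} [PseudoMetricSpace X]
    {s : Set X} (h : ∀ ε > 0, ∃ t : Set X, Dense t ∧ t ⊆ thickening ε s) : Dense s := by
  refine Metric.dense_iff.mpr fun x ε hε => ?_
  obtain ⟨t, ht, hts⟩ := h (ε / 2) (half_pos hε)
  obtain ⟨y, hyx, hyt⟩ := Metric.dense_iff.mp ht x (ε / 2) (half_pos hε)
  obtain ⟨z, hzs, hyz⟩ := mem_thickening_iff.mp (hts hyt)
  refine ⟨z, mem_ball.mpr ?_, hzs⟩
  calc dist z x ≤ dist z y + dist y x := dist_triangle z y x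
    _ < ε / 2 + ε / 2 := add_lt_add (by rwa [dist_comm]) (mem_ball.mp hyx)
    _ = ε := add_halves ε

theorem minimal_iff_limit_minimal_general {X : Type*} [MetricSpace X]
    (hX : ∀ x : X, ¬IsOpen ({x} : Set X))
    (f : ℕ → X → X) (F : X → X)
    (hsurj : ∀ n : ℕ, 1 ≤ n → Function.Surjective (f n))
    (hcoll : CollectivelyConverges f F) :
    MapMinimal F ↔ NDSMinimal f := by
  have hnonisolated : ∀ x : X, NeBot (𝓝[≠] x) := fun x =>
    ⟨fun h => hX x ((isOpen_singleton_iff_punctured_nhds x).mpr h)⟩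
  constructor
  · intro hmin x
    refine Metric.dense_of_forall_dense_subset_thickening fun ε hε => ?_
    obtain ⟨r₀, hr₀⟩ := hcoll.exists_dist_nds_iterate_lt hε
    refine ⟨_, hmin (F (nds f 1 r₀ x)), ?_⟩
    rintro _ ⟨k, rfl⟩
    refine Metric.mem_thickening_iff.mpr ⟨_, ⟨r₀ + (k + 1), rfl⟩, ?_⟩
    rw [dist_comm]
    simpa only [Function.iterate_succ_apply] using hr₀ (k + 1) (Nat.le_add_left 1 k) x
  · intro hmin z
    refine Metric.dense_of_forall_dense_subset_thickening fun ε hε => ?_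
    obtain ⟨r₀, hr₀⟩ := hcoll.exists_dist_nds_iterate_lt hε
    obtain ⟨x, rfl⟩ := nds_one_surjective hsurj r₀ z
    have hinit : ((fun n => nds f 1 n x) '' Iic r₀).Finite := (finite_Iic r₀).image _
    refine ⟨_, (hmin x).sdiff_finite hinit, ?_⟩
    rintro _ ⟨⟨n, rfl⟩, hn⟩
    obtain ⟨k, rfl⟩ : ∃ k, n = r₀ + (k + 1) := by
      have : r₀ < n := not_le.mp fun h => hn ⟨n, h, rfl⟩
      exact ⟨n - r₀ - 1, by omega⟩
    exact Metric.mem_thickening_iff.mpr ⟨_, ⟨k + 1, rfl⟩, hr₀ (k + 1) (Nat.le_add_left 1 k) x⟩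

theorem minimal_iff_limit_minimal {X : Type*} [MetricSpace X] [CompactSpace X]
    (hX : ∀ x : X, ¬IsOpen ({x} : Set X))
    (f : ℕ → X → X) (F : X → X)
    (hcont : ∀ n : ℕ, 1 ≤ n → Continuous (f n))
    (hfo : FeebleOpen f)
    (hsurj : ∀ n : ℕ, 1 ≤ n → Function.Surjective (f n))
    (hF : Continuous F)
    (hunif : TendstoUniformly (fun n x => f n x) F Filter.atTop)
    (hcoll : CollectivelyConverges f F) :
    MapMinimal F ↔ NDSMinimal f :=
  minimal_iff_limit_minimal_general hX f F hsurj hcoll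
end
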